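/- arXiv:1610.01357 — 2 statements merged into one kernel-verified Lean document; each statement's English description precedes it below -/
import Mathlib

section
/- For p ≥ 1, q_p(G) ≤ 2^{p-1}·ψ(G), where ψ(G) = min over disjoint S,T ⊆ V with S ∪ T nonempty of (2e(S) + 2e(T) + cut(S ∪ T))/|S ∪ T|. -/
open Finset

variable {V : Type*}

/-- Signless p-Laplacian form: `Q_p(x) = Σ_{{i,j}∈E} |x_i + x_j|^p`. -/
noncomputable def Qp [Fintype V] (G : SimpleGraph V) [Fintype G.edgeSet] (p : ℝ)
    (x : V → ℝ) : ℝ :=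
  ∑ e ∈ G.edgeFinset,
    Sym2.lift ⟨fun i j => |x i + x j| ^ p, fun i j => by simp [add_comm]⟩ e

/-- The p-norm unit sphere condition. -/
def unitSphere [Fintype V] (p : ℝ) (x : V → ℝ) : Prop := ∑ i, |x i| ^ p = 1

/-- Smallest signless p-Laplacian eigenvalue. -/
noncomputable def qp [Fintype V] (G : SimpleGraph V) [Fintype G.edgeSet] (p : ℝ) : ℝ :=
  sInf {r | ∃ x : V → ℝ, unitSphere p x ∧ Qp G p x = r}

/-- Largest signless p-Laplacian eigenvalue. -/
noncomputable def lamp [Fintype V] (G : SimpleGraph V) [Fintype G.edgeSet] (p : ℝ) : ℝ :=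
  sSup {r | ∃ x : V → ℝ, unitSphere p x ∧ Qp G p x = r}

open Classical in
/-- Number of edges with both endpoints in `S`. -/
noncomputable def eIn [Fintype V] (G : SimpleGraph V) [Fintype G.edgeSet] (S : Finset V) : ℕ :=
  (G.edgeFinset.filter fun e => ∀ v ∈ e, v ∈ S).card

open Classical in
/-- Number of edges with exactly one endpoint in `U`. -/
noncomputable def cutN [Fintype V] (G : SimpleGraph V) [Fintype G.edgeSet] (U : Finset V) : ℕ :=
  (G.edgeFinset.filter fun e => (∃ v ∈ e, v ∈ U) ∧ (∃ w ∈ e, w ∉ U)).card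

/-- Desai–Rao bipartiteness parameter ψ(G). -/
noncomputable def psi [Fintype V] [DecidableEq V] (G : SimpleGraph V) [Fintype G.edgeSet] : ℝ :=
  sInf {r | ∃ S T : Finset V, Disjoint S T ∧ (S ∪ T).Nonempty ∧
    r = (2 * eIn G S + 2 * eIn G T + cutN G (S ∪ T)) / (S ∪ T).card}

open Classical in
/-- `h_g(U)`: min over thresholds `0 ≤ t < max g` of `cut(C_t)/|C_t|` where `C_t = {i : g i > t}`. -/
noncomputable def hgC [Fintype V] [DecidableEq V] (G : SimpleGraph V) [Fintype G.edgeSet]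
    (g : V → ℝ) : ℝ :=
  sInf {r | ∃ t : ℝ, 0 ≤ t ∧ t < sSup (Set.range g) ∧
    r = (cutN G (univ.filter fun i => t < g i) : ℝ) / (univ.filter fun i => t < g i).card}

/-- Eigenpair of the signless p-Laplacian. -/
def IsEigenpair [Fintype V] (G : SimpleGraph V) [DecidableRel G.Adj] (p : ℝ)
    (x : V → ℝ) (μ : ℝ) : Prop :=
  ∀ k, ∑ j ∈ G.neighborFinset k, Real.sign (x k + x j) * |x k + x j| ^ (p - 1)
      = μ * (Real.sign (x k) * |x k| ^ (p - 1))

/-- Vertex bipartiteness: minimum number of vertices to delete to make `G` bipartite. -/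
noncomputable def nuG [Fintype V] [DecidableEq V] (G : SimpleGraph V) : ℕ :=
  sInf {k | ∃ S : Finset V, S.card = k ∧ ((SimpleGraph.induce ((↑S : Set V)ᶜ) G).Colorable 2)}

/-! Test the Rayleigh quotient `Q_p(x) / ∑ |x i|^p` on the signed indicator `x = 𝟙_S - 𝟙_T`
of disjoint `S, T`: an edge inside `S` or inside `T` contributes `2^p`, an edge leaving `S ∪ T`
contributes `1`, every other edge `0`. The quotient is therefore
`(2^p e(S) + 2^p e(T) + cut(S ∪ T)) / |S ∪ T|`, which is at most `2^(p-1)` times the ratio in `ψ(G)`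
because `2^(p-1) ≥ 1` when `p ≥ 1`. -/

section RayleighQuotient

variable [Fintype V] (G : SimpleGraph V) [Fintype G.edgeSet] {p : ℝ}

lemma Qp_nonneg (x : V → ℝ) : 0 ≤ Qp G p x :=
  Finset.sum_nonneg fun e _ => e.ind fun _ _ => Real.rpow_nonneg (abs_nonneg _) _

lemma qp_le_Qp {x : V → ℝ} (hx : unitSphere p x) : qp G p ≤ Qp G p x :=
  csInf_le ⟨0, by rintro _ ⟨y, -, rfl⟩; exact Qp_nonneg G y⟩ ⟨x, hx, rfl⟩

lemma Qp_smul {c : ℝ} (hc : 0 ≤ c) (x : V → ℝ) : Qp G p (c • x) = c ^ p * Qp G p x := by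
  rw [Qp, Qp, Finset.mul_sum]
  refine Finset.sum_congr rfl fun e _ => e.ind fun i j => ?_
  simp only [Sym2.lift_mk, Pi.smul_apply, smul_eq_mul, ← mul_add, abs_mul, abs_of_nonneg hc,
    Real.mul_rpow hc (abs_nonneg _)]

lemma qp_le_Qp_div (hp : p ≠ 0) {x : V → ℝ} (hx : 0 < ∑ i, |x i| ^ p) :
    qp G p ≤ Qp G p x / ∑ i, |x i| ^ p := by
  set s := ∑ i, |x i| ^ p
  set c := s ^ (-p⁻¹)
  have hc : 0 ≤ c := Real.rpow_nonneg hx.le _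
  have hcp : c ^ p = s⁻¹ := by
    rw [← Real.rpow_mul hx.le, neg_mul, inv_mul_cancel₀ hp, Real.rpow_neg_one]
  have hunit : unitSphere p (c • x) := by
    simp only [unitSphere, Pi.smul_apply, smul_eq_mul, abs_mul, abs_of_nonneg hc,
      Real.mul_rpow hc (abs_nonneg _), ← Finset.mul_sum, hcp]
    exact inv_mul_cancel₀ hx.ne'
  calc qp G p ≤ Qp G p (c • x) := qp_le_Qp G hunit
    _ = Qp G p x / s := by rw [Qp_smul G hc, hcp, inv_mul_eq_div]

end RayleighQuotient

section SignedIndicator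

variable [DecidableEq V]

def signedIndicator (S T : Finset V) (i : V) : ℝ :=
  if i ∈ S then 1 else if i ∈ T then -1 else 0

variable {S T : Finset V} {p : ℝ}

open Classical in
lemma abs_signedIndicator_add_rpow (hp : p ≠ 0) (hST : Disjoint S T) (i j : V) :
    |signedIndicator S T i + signedIndicator S T j| ^ p =
      (if ∀ v ∈ s(i, j), v ∈ S then 2 ^ p else 0) + (if ∀ v ∈ s(i, j), v ∈ T then 2 ^ p else 0) +
      (if (∃ v ∈ s(i, j), v ∈ S ∪ T) ∧ (∃ w ∈ s(i, j), w ∉ S ∪ T) then 1 else 0) := by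
  have hdisj := Finset.disjoint_left.1 hST
  by_cases hiS : i ∈ S <;> by_cases hjS : j ∈ S <;> by_cases hiT : i ∈ T <;> by_cases hjT : j ∈ T <;>
    first
    | exact absurd hiT (hdisj hiS)
    | exact absurd hjT (hdisj hjS)
    | simp [signedIndicator, hiS, hjS, hiT, hjT, Real.zero_rpow hp, one_add_one_eq_two,
        show |(-1 : ℝ) + -1| = 2 by norm_num]

variable [Fintype V]

lemma sum_abs_signedIndicator_rpow (hp : p ≠ 0) :
    ∑ i, |signedIndicator S T i| ^ p = (S ∪ T).card := by
  have h : ∀ i, |signedIndicator S T i| ^ p = if i ∈ S ∪ T then 1 else 0 := fun i => by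
    by_cases hS : i ∈ S <;> by_cases hT : i ∈ T <;>
      simp [signedIndicator, hS, hT, Real.zero_rpow hp]
  simp only [h, Finset.sum_boole, Finset.filter_mem_eq_inter, Finset.univ_inter]

open Classical in
lemma Qp_signedIndicator (G : SimpleGraph V) [Fintype G.edgeSet] (hp : p ≠ 0)
    (hST : Disjoint S T) :
    Qp G p (signedIndicator S T) = 2 ^ p * eIn G S + 2 ^ p * eIn G T + cutN G (S ∪ T) := by
  calc Qp G p (signedIndicator S T)
      = ∑ e ∈ G.edgeFinset, ((if ∀ v ∈ e, v ∈ S then 2 ^ p else 0) +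
          (if ∀ v ∈ e, v ∈ T then 2 ^ p else 0) +
          (if (∃ v ∈ e, v ∈ S ∪ T) ∧ (∃ w ∈ e, w ∉ S ∪ T) then 1 else 0)) :=
        Finset.sum_congr rfl fun e _ => e.ind fun i j => by
          -- `convert` only has to reconcile the `Decidable` instances of the conditions
          rw [Sym2.lift_mk]
          convert abs_signedIndicator_add_rpow hp hST i j
    _ = _ := by
        simp only [Finset.sum_add_distrib, ← Finset.sum_filter, Finset.sum_const, nsmul_eq_mul,
          mul_one, eIn, cutN, mul_comm _ ((2 : ℝ) ^ p)]
        congr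

end SignedIndicator

lemma qp_le_two_rpow_mul_div [Fintype V] [DecidableEq V] (G : SimpleGraph V) [Fintype G.edgeSet]
    {p : ℝ} (hp : 1 ≤ p) {S T : Finset V} (hST : Disjoint S T) (hne : (S ∪ T).Nonempty) :
    qp G p ≤ 2 ^ (p - 1) *
      ((2 * eIn G S + 2 * eIn G T + cutN G (S ∪ T)) / (S ∪ T).card) := by
  have hp0 : p ≠ 0 := by positivity
  have hcard : (0 : ℝ) < (S ∪ T).card := by exact_mod_cast hne.card_pos
  have htwo : (2 : ℝ) ^ p = 2 ^ (p - 1) * 2 := by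
    rw [← Real.rpow_add_one two_ne_zero, sub_add_cancel]
  have hone : (1 : ℝ) ≤ 2 ^ (p - 1) := Real.one_le_rpow one_le_two (by linarith)
  calc qp G p
      ≤ Qp G p (signedIndicator S T) / ∑ i, |signedIndicator S T i| ^ p :=
        qp_le_Qp_div G hp0 (by rwa [sum_abs_signedIndicator_rpow hp0])
    _ = (2 ^ p * eIn G S + 2 ^ p * eIn G T + cutN G (S ∪ T)) / (S ∪ T).card := by
        rw [Qp_signedIndicator G hp0 hST, sum_abs_signedIndicator_rpow hp0]
    _ ≤ 2 ^ (p - 1) * ((2 * eIn G S + 2 * eIn G T + cutN G (S ∪ T)) / (S ∪ T).card) := by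
        rw [← mul_div_assoc, htwo]
        gcongr
        nlinarith [(cutN G (S ∪ T)).cast_nonneg (α := ℝ)]

theorem stmt_2 [Fintype V] [DecidableEq V] [Nonempty V] (G : SimpleGraph V)
    [DecidableRel G.Adj] (p : ℝ) (hp : 1 ≤ p) :
    qp G p ≤ (2 : ℝ) ^ (p - 1) * psi G := by
  have htwo : (0 : ℝ) < 2 ^ (p - 1) := Real.rpow_pos_of_pos two_pos _
  rw [← div_le_iff₀' htwo]
  obtain ⟨v⟩ := ‹Nonempty V›
  refine le_csInf ⟨_, {v}, ∅, Finset.disjoint_empty_right _, by simp, rfl⟩ ?_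
  rintro _ ⟨S, T, hST, hne, rfl⟩
  rw [div_le_iff₀' htwo]
  exact qp_le_two_rpow_mul_div G hp hST hne
end

section
/- For p > 1 and G connected, the maximizer of Q_p on the unit p-sphere is unique up to sign: if x and y are both strictly positive unit-p-norm vectors with Q_p(x) = Q_p(y) = λ_p(G), then x = y. -/
open Finset

variable {V : Type*}

/-!
Given two positive maximizers `x` and `y`, the vector `z` of coordinatewise power means
`zᵢ = ((xᵢᵖ + yᵢᵖ)/2)^{1/p}` is again a unit vector. Minkowski's inequality for the vectors
`(xᵢ, yᵢ), (xⱼ, yⱼ) ∈ ℝ²` bounds each edge term of `Q_p(z)` from below by the average of those of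
`Q_p(x)` and `Q_p(y)`, so `z` is a maximizer too and all these Minkowski inequalities are
equalities. By strict convexity of `t ↦ tᵖ` this forces `xᵢ / yᵢ = xⱼ / yⱼ` along every edge, hence
everywhere by connectedness, and the normalisation gives `x = y`.
-/

section Convexity

variable {p a b A B : ℝ}

lemma perspective_rpow_add_le (hp : 1 ≤ p) (ha : 0 ≤ a) (hb : 0 ≤ b) (hA : 0 < A) (hB : 0 < B) :
    (A + B) * ((a + b) / (A + B)) ^ p ≤ A * (a / A) ^ p + B * (b / B) ^ p := by
  have hS : 0 < A + B := add_pos hA hB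
  have hmid : (A / (A + B)) • (a / A) + (B / (A + B)) • (b / B) = (a + b) / (A + B) := by
    simp only [smul_eq_mul]; field_simp
  have hconv := (convexOn_rpow hp).2 (Set.mem_Ici.2 (div_nonneg ha hA.le))
    (Set.mem_Ici.2 (div_nonneg hb hB.le)) (div_pos hA hS).le (div_pos hB hS).le
    (by field_simp)
  rw [hmid, smul_eq_mul, smul_eq_mul] at hconv
  calc (A + B) * ((a + b) / (A + B)) ^ p
      ≤ (A + B) * (A / (A + B) * (a / A) ^ p + B / (A + B) * (b / B) ^ p) :=
        mul_le_mul_of_nonneg_left hconv hS.le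
    _ = A * (a / A) ^ p + B * (b / B) ^ p := by field_simp

lemma perspective_rpow_add_lt (hp : 1 < p) (ha : 0 ≤ a) (hb : 0 ≤ b) (hA : 0 < A) (hB : 0 < B)
    (hne : a / A ≠ b / B) :
    (A + B) * ((a + b) / (A + B)) ^ p < A * (a / A) ^ p + B * (b / B) ^ p := by
  have hS : 0 < A + B := add_pos hA hB
  have hmid : (A / (A + B)) • (a / A) + (B / (A + B)) • (b / B) = (a + b) / (A + B) := by
    simp only [smul_eq_mul]; field_simp
  have hconv := (strictConvexOn_rpow hp).2 (Set.mem_Ici.2 (div_nonneg ha hA.le))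
    (Set.mem_Ici.2 (div_nonneg hb hB.le)) hne (div_pos hA hS) (div_pos hB hS) (by field_simp)
  rw [hmid, smul_eq_mul, smul_eq_mul] at hconv
  calc (A + B) * ((a + b) / (A + B)) ^ p
      < (A + B) * (A / (A + B) * (a / A) ^ p + B / (A + B) * (b / B) ^ p) :=
        mul_lt_mul_of_pos_left hconv hS
    _ = A * (a / A) ^ p + B * (b / B) ^ p := by field_simp

end Convexity

noncomputable def powerMean (p a b : ℝ) : ℝ := ((a ^ p + b ^ p) / 2) ^ p⁻¹

section PowerMean

variable {p a b c d : ℝ}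

lemma powerMean_pos (ha : 0 < a) (hb : 0 < b) : 0 < powerMean p a b := by
  unfold powerMean; positivity

lemma powerMean_rpow (hp : p ≠ 0) (ha : 0 ≤ a) (hb : 0 ≤ b) :
    powerMean p a b ^ p = (a ^ p + b ^ p) / 2 :=
  Real.rpow_inv_rpow (by positivity) hp

lemma mul_div_powerMean_rpow_add (hp : p ≠ 0) (ha : 0 < a) (hb : 0 < b) :
    powerMean p a b * (a / powerMean p a b) ^ p + powerMean p a b * (b / powerMean p a b) ^ p
      = 2 * powerMean p a b := by
  have hM := powerMean_pos (p := p) ha hb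
  rw [Real.div_rpow ha.le hM.le, Real.div_rpow hb.le hM.le, powerMean_rpow hp ha.le hb.le]
  field_simp

lemma add_rpow_add_le_powerMean (hp : 1 ≤ p) (ha : 0 < a) (hb : 0 < b) (hc : 0 < c)
    (hd : 0 < d) :
    (a + b) ^ p + (c + d) ^ p ≤ 2 * (powerMean p a c + powerMean p b d) ^ p := by
  set A := powerMean p a c
  set B := powerMean p b d
  have hA : 0 < A := powerMean_pos ha hc
  have hB : 0 < B := powerMean_pos hb hd
  have hS : 0 < A + B := add_pos hA hB
  have hp0 : p ≠ 0 := by positivity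
  have hac := perspective_rpow_add_le hp ha.le hb.le hA hB
  have hbd := perspective_rpow_add_le hp hc.le hd.le hA hB
  have hAac := mul_div_powerMean_rpow_add hp0 ha hc
  have hBbd := mul_div_powerMean_rpow_add hp0 hb hd
  rw [Real.div_rpow (by positivity) hS.le] at hac hbd
  have hscaled : (A + B) * (((a + b) ^ p + (c + d) ^ p) / (A + B) ^ p) ≤ (A + B) * 2 := by
    rw [add_div, mul_add]; linarith
  have := le_of_mul_le_mul_left hscaled hS
  rwa [div_le_iff₀ (by positivity)] at this

lemma add_rpow_add_lt_powerMean (hp : 1 < p) (ha : 0 < a) (hb : 0 < b) (hc : 0 < c)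
    (hd : 0 < d) (hne : a / c ≠ b / d) :
    (a + b) ^ p + (c + d) ^ p < 2 * (powerMean p a c + powerMean p b d) ^ p := by
  set A := powerMean p a c
  set B := powerMean p b d
  have hA : 0 < A := powerMean_pos ha hc
  have hB : 0 < B := powerMean_pos hb hd
  have hS : 0 < A + B := add_pos hA hB
  have hp0 : p ≠ 0 := by positivity
  have hAac := mul_div_powerMean_rpow_add hp0 ha hc
  have hBbd := mul_div_powerMean_rpow_add hp0 hb hd
  have hne' : a / A ≠ b / B ∨ c / A ≠ d / B := by
    by_contra! h
    rw [← div_div_div_cancel_right₀ hA.ne', ← div_div_div_cancel_right₀ hB.ne' b, h.1, h.2] at hne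
    exact hne rfl
  have hscaled : (A + B) * (((a + b) ^ p + (c + d) ^ p) / (A + B) ^ p) < (A + B) * 2 := by
    rw [add_div, mul_add, ← Real.div_rpow (by positivity) hS.le,
      ← Real.div_rpow (by positivity) hS.le]
    rcases hne' with h | h
    · linarith [perspective_rpow_add_lt hp ha.le hb.le hA hB h,
        perspective_rpow_add_le hp.le hc.le hd.le hA hB]
    · linarith [perspective_rpow_add_le hp.le ha.le hb.le hA hB,
        perspective_rpow_add_lt hp hc.le hd.le hA hB h]
  have := lt_of_mul_lt_mul_left hscaled hS.le
  rwa [div_lt_iff₀ (by positivity)] at this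

end PowerMean

section UnitSphere

variable [Fintype V] {p : ℝ}

lemma unitSphere_iff_of_pos {x : V → ℝ} (hx : ∀ i, 0 < x i) :
    unitSphere p x ↔ ∑ i, x i ^ p = 1 := by
  simp only [unitSphere, abs_of_pos (hx _)]

lemma unitSphere_powerMean (hp : p ≠ 0) {x y : V → ℝ}
    (hxpos : ∀ i, 0 < x i) (hypos : ∀ i, 0 < y i) (hx : unitSphere p x) (hy : unitSphere p y) :
    unitSphere p fun i => powerMean p (x i) (y i) := by
  rw [unitSphere_iff_of_pos hxpos] at hx
  rw [unitSphere_iff_of_pos hypos] at hy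
  rw [unitSphere_iff_of_pos fun i => powerMean_pos (hxpos i) (hypos i)]
  simp only [powerMean_rpow hp (hxpos _).le (hypos _).le, ← sum_div, sum_add_distrib, hx, hy]
  norm_num

lemma abs_le_one_of_unitSphere (hp : 0 < p) {u : V → ℝ}
    (hu : unitSphere p u) (i : V) : |u i| ≤ 1 := by
  by_contra! h
  have hle : |u i| ^ p ≤ 1 :=
    hu ▸ single_le_sum (f := fun j => |u j| ^ p) (fun j _ => by positivity) (mem_univ i)
  exact (Real.one_lt_rpow h hp).not_ge hle

lemma eq_of_unitSphere_of_div_eq (hp : p ≠ 0) {x y : V → ℝ}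
    (hxpos : ∀ i, 0 < x i) (hypos : ∀ i, 0 < y i) (hx : unitSphere p x) (hy : unitSphere p y)
    (h : ∀ i j, x i / y i = x j / y j) : x = y := by
  rw [unitSphere_iff_of_pos hxpos] at hx
  rw [unitSphere_iff_of_pos hypos] at hy
  funext i
  set κ := x i / y i
  have hκ : 0 < κ := div_pos (hxpos i) (hypos i)
  have hκp : κ ^ p = 1 := by
    rw [← hx, ← mul_one (κ ^ p), ← hy, mul_sum]
    refine sum_congr rfl fun j _ => ?_
    rw [← Real.mul_rpow hκ.le (hypos j).le, show κ = x j / y j from h i j,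
      div_mul_cancel₀ _ (hypos j).ne']
  have hκ1 : κ = 1 := by
    rwa [← Real.one_rpow p, Real.rpow_left_inj hκ.le zero_le_one hp] at hκp
  rwa [div_eq_one_iff_eq (hypos i).ne'] at hκ1

end UnitSphere

lemma SimpleGraph.Preconnected.eq_of_forall_adj {α : Type*} {G : SimpleGraph V}
    (hG : G.Preconnected) {f : V → α} (hf : ∀ i j, G.Adj i j → f i = f j) (i j : V) :
    f i = f j := by
  obtain ⟨w⟩ := hG i j
  induction w with
  | nil => rfl
  | cons h _ ih => exact (hf _ _ h).trans ih

section Qp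

variable [Fintype V] (G : SimpleGraph V) [Fintype G.edgeSet] {p : ℝ}

lemma Qp_le_lamp (hp : 0 < p) {u : V → ℝ} (hu : unitSphere p u) : Qp G p u ≤ lamp G p := by
  refine le_csSup ⟨#G.edgeFinset * 2 ^ p, ?_⟩ ⟨u, hu, rfl⟩
  rintro _ ⟨v, hv, rfl⟩
  rw [Qp, ← nsmul_eq_mul, ← sum_const]
  refine sum_le_sum fun e _ => ?_
  induction e using Sym2.ind with
  | _ i j =>
    simp only [Sym2.lift_mk]
    refine Real.rpow_le_rpow (abs_nonneg _) ?_ hp.le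
    linarith [abs_add_le (v i) (v j), abs_le_one_of_unitSphere hp hv i,
      abs_le_one_of_unitSphere hp hv j]

lemma Qp_add_Qp_lt_two_mul_Qp_powerMean (hp : 1 < p) {x y : V → ℝ} (hxpos : ∀ i, 0 < x i)
    (hypos : ∀ i, 0 < y i) {i j : V} (hij : G.Adj i j) (hne : x i / y i ≠ x j / y j) :
    Qp G p x + Qp G p y < 2 * Qp G p fun i => powerMean p (x i) (y i) := by
  rw [Qp, Qp, Qp, ← sum_add_distrib, mul_sum]
  have hz (k : V) : 0 < powerMean p (x k) (y k) := powerMean_pos (hxpos k) (hypos k)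
  refine sum_lt_sum (fun e _ => ?_) ⟨s(i, j), G.mem_edgeFinset.2 hij, ?_⟩
  · induction e using Sym2.ind with
    | _ k l =>
      simp only [Sym2.lift_mk, abs_of_pos (add_pos (hxpos _) (hxpos _)),
        abs_of_pos (add_pos (hypos _) (hypos _)),
        abs_of_pos (add_pos (hz _) (hz _))]
      exact add_rpow_add_le_powerMean hp.le (hxpos k) (hxpos l) (hypos k) (hypos l)
  · simp only [Sym2.lift_mk, abs_of_pos (add_pos (hxpos _) (hxpos _)),
      abs_of_pos (add_pos (hypos _) (hypos _)),
      abs_of_pos (add_pos (hz _) (hz _))]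
    exact add_rpow_add_lt_powerMean hp (hxpos i) (hxpos j) (hypos i) (hypos j) hne

end Qp

theorem stmt_13_general [Fintype V] (G : SimpleGraph V) [DecidableRel G.Adj]
    (hc : G.Connected) (p : ℝ) (hp : 1 < p) (x y : V → ℝ)
    (hxpos : ∀ i, 0 < x i) (hypos : ∀ i, 0 < y i)
    (hx : unitSphere p x) (hy : unitSphere p y)
    (hxmax : Qp G p x = lamp G p) (hymax : Qp G p y = lamp G p) :
    x = y := by
  have hp0 : 0 < p := zero_lt_one.trans hp
  have hz := Qp_le_lamp G hp0 (unitSphere_powerMean hp0.ne' hxpos hypos hx hy)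
  have hadj (i j : V) (hij : G.Adj i j) : x i / y i = x j / y j := by
    by_contra hne
    linarith [Qp_add_Qp_lt_two_mul_Qp_powerMean G hp hxpos hypos hij hne]
  exact eq_of_unitSphere_of_div_eq hp0.ne' hxpos hypos hx hy
    (hc.preconnected.eq_of_forall_adj hadj)

theorem stmt_13 [Fintype V] [DecidableEq V] (G : SimpleGraph V) [DecidableRel G.Adj]
    (hc : G.Connected) (p : ℝ) (hp : 1 < p) (x y : V → ℝ)
    (hxpos : ∀ i, 0 < x i) (hypos : ∀ i, 0 < y i)
    (hx : unitSphere p x) (hy : unitSphere p y)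
    (hxmax : Qp G p x = lamp G p) (hymax : Qp G p y = lamp G p) :
    x = y :=
  stmt_13_general G hc p hp x y hxpos hypos hx hy hxmax hymax
end
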